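/- arXiv:1906.04641 — 10 statements merged into one kernel-verified Lean document; each statement's English description precedes it below -/
import Mathlib

section
/- For every real number x with 0 < x < π/2, the following double inequality holds: 3/8 < (1 - cos x / cos(x/2)) / x² < 4/π². -/
/-!
With `t = x / 2` and `f t = 1 - cos (2t) / cos t = 1 - 2 cos t + sec t`, the quotient equals
`f t / (4 t²)`. One has `f 0 = f' 0 = 0`, `f'' 0 = 3` and `f''' > 0` on `(0, π/2)`; repeatedly
integrating `f''' > 0` from `0` gives `f t > 3t²/2` (the lower bound), and also
`t f'' - f' > 0`, hence `t f' - 2 f > 0`, i.e. `f t / t²` is increasing, so it stays below its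
value `16 / π²` at `t = π/4` (the upper bound).
-/

open Real Set

theorem pos_of_hasDerivAt_pos {F F' : ℝ → ℝ} {a b : ℝ} (ha : F a = 0)
    (hF : ∀ t ∈ Ico a b, HasDerivAt F (F' t) t) (hF' : ∀ t ∈ Ioo a b, 0 < F' t)
    {t : ℝ} (ht : t ∈ Ioo a b) : 0 < F t := by
  have hsub : Icc a t ⊆ Ico a b := Icc_subset_Ico_right ht.2
  have hmono : StrictMonoOn F (Icc a t) := by
    refine strictMonoOn_of_hasDerivWithinAt_pos (f' := F') (convex_Icc a t)
      (fun s hs => (hF s (hsub hs)).continuousAt.continuousWithinAt) (fun s hs => ?_) fun s hs => ?_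
    all_goals rw [interior_Icc] at hs
    · exact (hF s (hsub (Ioo_subset_Icc_self hs))).hasDerivWithinAt
    · exact hF' s ⟨hs.1, hs.2.trans ht.2⟩
  simpa [ha] using hmono (left_mem_Icc.2 ht.1.le) (right_mem_Icc.2 ht.1.le) ht.1

namespace Sandor

noncomputable def f (t : ℝ) : ℝ := 1 - 2 * cos t + (cos t)⁻¹

noncomputable def df (t : ℝ) : ℝ := 2 * sin t + sin t / cos t ^ 2

noncomputable def d2f (t : ℝ) : ℝ := 2 * cos t - (cos t)⁻¹ + 2 / cos t ^ 3

noncomputable def d3f (t : ℝ) : ℝ := sin t * (6 / cos t ^ 4 - 1 / cos t ^ 2 - 2)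

variable {t : ℝ}

theorem one_sub_cos_two_mul_div_cos (h : cos t ≠ 0) : 1 - cos (2 * t) / cos t = f t := by
  rw [cos_two_mul, f]
  field_simp
  ring

theorem hasDerivAt_f (h : cos t ≠ 0) : HasDerivAt f (df t) t := by
  refine (((hasDerivAt_const t 1).sub ((hasDerivAt_cos t).const_mul 2)).add
    ((hasDerivAt_cos t).inv h)).congr_deriv ?_
  rw [df]
  ring

theorem hasDerivAt_df (h : cos t ≠ 0) : HasDerivAt df (d2f t) t := by
  refine (((hasDerivAt_sin t).const_mul 2).add
    ((hasDerivAt_sin t).div ((hasDerivAt_cos t).pow 2) (pow_ne_zero 2 h))).congr_deriv ?_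
  simp only [d2f, Pi.pow_apply]
  field_simp
  rw [sin_sq]
  ring

theorem hasDerivAt_d2f (h : cos t ≠ 0) : HasDerivAt d2f (d3f t) t := by
  refine ((((hasDerivAt_cos t).const_mul 2).sub ((hasDerivAt_cos t).inv h)).add
    ((hasDerivAt_const t (2 : ℝ)).div ((hasDerivAt_cos t).pow 3) (pow_ne_zero 3 h))).congr_deriv ?_
  simp only [d3f, Pi.pow_apply]
  field_simp
  ring

theorem cos_ne_zero_of_mem_Ico (ht : t ∈ Ico 0 (π / 2)) : cos t ≠ 0 :=
  (cos_pos_of_mem_Ioo ⟨by linarith [ht.1, pi_pos], ht.2⟩).ne'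

theorem d3f_pos (ht : t ∈ Ioo 0 (π / 2)) : 0 < d3f t := by
  have hsin : 0 < sin t := sin_pos_of_pos_of_lt_pi ht.1 (by linarith [ht.2, pi_pos])
  have hcos : 0 < cos t := cos_pos_of_mem_Ioo ⟨by linarith [ht.1, pi_pos], ht.2⟩
  have hsec : 1 ≤ 1 / cos t ^ 2 :=
    one_le_one_div (by positivity) (pow_le_one₀ hcos.le (cos_le_one t))
  have h4 : 6 / cos t ^ 4 = 6 * (1 / cos t ^ 2) ^ 2 := by field_simp
  rw [d3f, h4]
  exact mul_pos hsin (by nlinarith)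

theorem three_lt_d2f (ht : t ∈ Ioo 0 (π / 2)) : 3 < d2f t :=
  sub_pos.1 <| pos_of_hasDerivAt_pos (F := fun s => d2f s - 3) (by norm_num [d2f])
    (fun s hs => (hasDerivAt_d2f (cos_ne_zero_of_mem_Ico hs)).sub_const 3) (fun _ hs => d3f_pos hs) ht

theorem three_mul_lt_df (ht : t ∈ Ioo 0 (π / 2)) : 3 * t < df t := by
  refine sub_pos.1 <| pos_of_hasDerivAt_pos (F := fun s => df s - 3 * s) (by simp [df])
    (fun s hs => ?_) (fun _ hs => sub_pos.2 (three_lt_d2f hs)) ht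
  exact ((hasDerivAt_df (cos_ne_zero_of_mem_Ico hs)).sub
    ((hasDerivAt_id s).const_mul 3)).congr_deriv (by simp)

theorem three_halves_mul_sq_lt_f (ht : t ∈ Ioo 0 (π / 2)) : 3 / 2 * t ^ 2 < f t := by
  refine sub_pos.1 <| pos_of_hasDerivAt_pos (F := fun s => f s - 3 / 2 * s ^ 2) (by norm_num [f])
    (fun s hs => ?_) (fun _ hs => sub_pos.2 (three_mul_lt_df hs)) ht
  exact ((hasDerivAt_f (cos_ne_zero_of_mem_Ico hs)).sub
    ((hasDerivAt_pow 2 s).const_mul (3 / 2))).congr_deriv (by ring)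

theorem mul_d2f_sub_df_pos (ht : t ∈ Ioo 0 (π / 2)) : 0 < t * d2f t - df t := by
  refine pos_of_hasDerivAt_pos (F := fun s => s * d2f s - df s) (by simp [df])
    (fun s hs => ?_) (fun s hs => mul_pos hs.1 (d3f_pos hs)) ht
  have hc := cos_ne_zero_of_mem_Ico hs
  exact (((hasDerivAt_id s).mul (hasDerivAt_d2f hc)).sub (hasDerivAt_df hc)).congr_deriv
    (by simp)

theorem mul_df_sub_two_mul_f_pos (ht : t ∈ Ioo 0 (π / 2)) : 0 < t * df t - 2 * f t := by
  refine pos_of_hasDerivAt_pos (F := fun s => s * df s - 2 * f s) (by norm_num [df, f])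
    (fun s hs => ?_) (fun _ hs => mul_d2f_sub_df_pos hs) ht
  have hc := cos_ne_zero_of_mem_Ico hs
  exact (((hasDerivAt_id s).mul (hasDerivAt_df hc)).sub
    ((hasDerivAt_f hc).const_mul 2)).congr_deriv (by simp; ring)

theorem strictMonoOn_f_div_sq : StrictMonoOn (fun t => f t / t ^ 2) (Ioo 0 (π / 2)) := by
  refine strictMonoOn_of_hasDerivWithinAt_pos
    (f' := fun t => (t * df t - 2 * f t) / t ^ 3) (convex_Ioo 0 (π / 2))
    (fun t ht => ?_) (fun t ht => ?_) fun t ht => ?_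
  · have hc := cos_ne_zero_of_mem_Ico (Ioo_subset_Ico_self ht)
    exact ((hasDerivAt_f hc).continuousAt.div (continuousAt_id.pow 2)
      (pow_ne_zero 2 ht.1.ne')).continuousWithinAt
  · rw [interior_Ioo] at ht ⊢
    have hc := cos_ne_zero_of_mem_Ico (Ioo_subset_Ico_self ht)
    have ht0 : t ≠ 0 := ht.1.ne'
    refine (((hasDerivAt_f hc).div (hasDerivAt_pow 2 t)
      (pow_ne_zero 2 ht0)).congr_deriv ?_).hasDerivWithinAt
    field_simp
    ring
  · rw [interior_Ioo] at ht
    exact div_pos (mul_df_sub_two_mul_f_pos ht) (pow_pos ht.1 3)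

theorem f_pi_div_four : f (π / 4) = 1 := by
  have h2 : √2 ≠ 0 := by positivity
  rw [f, cos_pi_div_four]
  field_simp
  rw [mul_sub, mul_one, Real.mul_self_sqrt zero_le_two]
  ring

end Sandor

open Sandor in
theorem sandor_first_inequality (x : ℝ) (hx : 0 < x) (hx' : x < π / 2) :
    3 / 8 < (1 - Real.cos x / Real.cos (x / 2)) / x ^ 2 ∧
    (1 - Real.cos x / Real.cos (x / 2)) / x ^ 2 < 4 / π ^ 2 := by
  have hpi := pi_pos
  have ht : x / 2 ∈ Ioo 0 (π / 2) := ⟨by linarith, by linarith⟩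
  have hquot : (1 - cos x / cos (x / 2)) / x ^ 2 = f (x / 2) / (x / 2) ^ 2 / 4 := by
    rw [← one_sub_cos_two_mul_div_cos (cos_ne_zero_of_mem_Ico (Ioo_subset_Ico_self ht)),
      mul_div_cancel₀ x two_ne_zero]
    ring
  have hlower := three_halves_mul_sq_lt_f ht
  have hupper : f (x / 2) / (x / 2) ^ 2 < 1 / (π / 4) ^ 2 := by
    rw [← f_pi_div_four]
    exact strictMonoOn_f_div_sq ht ⟨by linarith, by linarith⟩ (by linarith)
  rw [hquot]
  constructor
  · rw [lt_div_iff₀ four_pos, lt_div_iff₀ (by positivity)]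
    linarith
  · calc f (x / 2) / (x / 2) ^ 2 / 4 < 1 / (π / 4) ^ 2 / 4 := by gcongr
      _ = 4 / π ^ 2 := by field_simp
end

section
/- For every real number x with 0 < x < π/2, the following double inequality holds: (4/π²)·(2 - √2) < (2 - sin x / sin(x/2)) / x² < 1/4. -/
/-!
Since `sin x = 2 sin (x/2) cos (x/2)` and `1 - cos (x/2) = 2 sin² (x/4)`, the middle term equals
`(sin u / u)² / 4` with `u = x/4 ∈ (0, π/8)`. The upper bound is `sin u < u`. By concavity of `sin`
on `[0, π]`, `sin u / u` is strictly decreasing there, so it exceeds `sin (π/8) / (π/8)`, and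
`sin² (π/8) = (2 - √2)/4` gives the lower bound.
-/

open Real

theorem two_sub_sin_div_sin_half {x : ℝ} (hx : sin (x / 2) ≠ 0) :
    2 - sin x / sin (x / 2) = 4 * sin (x / 4) ^ 2 := by
  have hsin : sin x = 2 * sin (x / 2) * cos (x / 2) := by
    rw [← sin_two_mul, mul_div_cancel₀ x two_ne_zero]
  have hsq : sin (x / 4) ^ 2 = 1 / 2 - cos (x / 2) / 2 := by
    rw [sin_sq_eq_half_sub, show 2 * (x / 4) = x / 2 by ring]
  rw [hsin, hsq, mul_div_right_comm, mul_div_cancel_right₀ _ hx]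
  ring

theorem sin_div_lt_sin_div_of_lt {x y : ℝ} (hx : 0 < x) (hxy : x < y) (hy : y ≤ π) :
    sin y / y < sin x / x := by
  have h := strictConcaveOn_sin_Icc.secant_strict_mono (a := 0) ⟨le_rfl, pi_pos.le⟩
    ⟨hx.le, hxy.le.trans hy⟩ ⟨hx.le.trans hxy.le, hy⟩ hx.ne' (hx.trans hxy).ne' hxy
  simpa only [sin_zero, sub_zero] using h

theorem sq_sin_pi_div_eight : sin (π / 8) ^ 2 = (2 - √2) / 4 := by
  rw [sin_pi_div_eight, div_pow, sq_sqrt (by linarith [sqrt_two_lt_three_halves])]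
  norm_num

theorem sandor_second_inequality (x : ℝ) (hx : 0 < x) (hx' : x < π / 2) :
    (4 / π ^ 2) * (2 - Real.sqrt 2) < (2 - Real.sin x / Real.sin (x / 2)) / x ^ 2 ∧
    (2 - Real.sin x / Real.sin (x / 2)) / x ^ 2 < 1 / 4 := by
  have hu : 0 < x / 4 := by positivity
  have hsin_half : sin (x / 2) ≠ 0 :=
    (sin_pos_of_pos_of_lt_pi (by positivity) (by linarith [pi_pos])).ne'
  have hsinc_pos : 0 < sin (x / 4) / (x / 4) :=
    div_pos (sin_pos_of_pos_of_lt_pi hu (by linarith [pi_pos])) hu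
  have hreduce : (2 - sin x / sin (x / 2)) / x ^ 2 = (sin (x / 4) / (x / 4)) ^ 2 / 4 := by
    rw [two_sub_sin_div_sin_half hsin_half]
    field_simp
  rw [hreduce]
  constructor
  · have hsinc_gt : sin (π / 8) / (π / 8) < sin (x / 4) / (x / 4) :=
      sin_div_lt_sin_div_of_lt hu (by linarith) (by linarith [pi_pos])
    calc 4 / π ^ 2 * (2 - √2) = (sin (π / 8) / (π / 8)) ^ 2 / 4 := by
          rw [div_pow, sq_sin_pi_div_eight]
          field_simp
          ring
      _ < (sin (x / 4) / (x / 4)) ^ 2 / 4 := by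
          gcongr
          exact div_nonneg (sin_nonneg_of_nonneg_of_le_pi (by positivity) (by linarith [pi_pos]))
            (by positivity)
  · have hsinc_lt : sin (x / 4) / (x / 4) < 1 := (div_lt_one hu).2 (sin_lt hu)
    have hsq_lt : (sin (x / 4) / (x / 4)) ^ 2 < 1 := pow_lt_one₀ hsinc_pos.le hsinc_lt two_ne_zero
    linarith
end

section
/- Let a < b be real numbers, let f : (a,b) → ℝ be n times differentiable on (a,b) for a positive integer n, and suppose that for each k ∈ {0, 1, ..., n} the one-sided limit f^{(k)}(a+) = lim_{x→a+} f^{(k)}(x) exists and is finite, and that the one-sided limit f(b-) = lim_{x→b-} f(x) exists and is finite. If the n-th derivative f^{(n)} is strictly increasing on (a,b), then for all x ∈ (a,b): T_n(x) < f(x) < 𝕋_n(x), where T_n(x) = Σ_{k=0}^{n} f^{(k)}(a+)/k! · (x-a)^k is the first Taylor approximation of f in the right neighborhood of a, and 𝕋_n(x) = T_{n-1}(x) + (f(b-) - T_{n-1}(b)) · ((x-a)/(b-a))^n is the second Taylor approximation of f in the right neighborhood of a. -/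
/-
Both bounds are proved by induction on `n`, applying the case `n` to `f'`. The remainder
`f - Tₙ` tends to `0` at `a+` and its derivative is the remainder `f' - Tₙ₋₁[f']` of `f'`,
positive by induction, so `f - Tₙ` is positive. For the upper bound, the monotone form of
L'Hôpital's rule shows that `(f - Tₙ₋₁) / (x - a)ⁿ` is strictly increasing, since the quotient
of derivatives is `(f' - Tₙ₋₂[f']) / (n (x - a)ⁿ⁻¹)`; so it stays below its limit at `b-`,
which is the upper bound rearranged.
-/

open Set Filter
open scoped Topology Nat

section Order

variable {α β : Type*} [TopologicalSpace α] [LinearOrder α] [OrderTopology α] [DenselyOrdered α]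
  [TopologicalSpace β] [Preorder β] [OrderClosedTopology β] {g : α → β} {a b x : α} {L : β}

theorem StrictMonoOn.lt_of_tendsto_nhdsGT (hg : StrictMonoOn g (Ioo a b))
    (hL : Tendsto g (𝓝[>] a) (𝓝 L)) (hx : x ∈ Ioo a b) : L < g x := by
  obtain ⟨y, hay, hyx⟩ := exists_between hx.1
  have hy : y ∈ Ioo a b := ⟨hay, hyx.trans hx.2⟩
  have : NeBot (𝓝[>] a) := nhdsGT_neBot_of_exists_gt ⟨y, hay⟩
  refine lt_of_le_of_lt (le_of_tendsto hL ?_) (hg hy hx hyx)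
  filter_upwards [Ioo_mem_nhdsGT hay] with z hz using (hg ⟨hz.1, hz.2.trans hy.2⟩ hy hz.2).le

theorem StrictMonoOn.lt_of_tendsto_nhdsLT (hg : StrictMonoOn g (Ioo a b))
    (hL : Tendsto g (𝓝[<] b) (𝓝 L)) (hx : x ∈ Ioo a b) : g x < L := by
  obtain ⟨y, hxy, hyb⟩ := exists_between hx.2
  have hy : y ∈ Ioo a b := ⟨hx.1.trans hxy, hyb⟩
  have : NeBot (𝓝[<] b) := nhdsLT_neBot_of_exists_lt ⟨y, hyb⟩
  refine lt_of_lt_of_le (hg hx hy hxy) (ge_of_tendsto hL ?_)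
  filter_upwards [Ioo_mem_nhdsLT hyb] with z hz using (hg hy ⟨hy.1.trans hz.1, hz.2⟩ hz.1).le

end Order

theorem strictMonoOn_Ioo_of_hasDerivAt_pos {a b : ℝ} {f f' : ℝ → ℝ}
    (hf : ∀ x ∈ Ioo a b, HasDerivAt f (f' x) x) (hpos : ∀ x ∈ Ioo a b, 0 < f' x) :
    StrictMonoOn f (Ioo a b) :=
  strictMonoOn_of_deriv_pos (convex_Ioo a b)
    (fun x hx => (hf x hx).continuousAt.continuousWithinAt) fun x hx => by
      rw [interior_Ioo] at hx
      rw [(hf x hx).deriv]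
      exact hpos x hx

/-- The monotone form of L'Hôpital's rule (Anderson, Vamanamurthy and Vuorinen). -/
theorem strictMonoOn_div_of_strictMonoOn_deriv_div {a b : ℝ} {f f' g g' : ℝ → ℝ}
    (hff' : ∀ x ∈ Ioo a b, HasDerivAt f (f' x) x) (hgg' : ∀ x ∈ Ioo a b, HasDerivAt g (g' x) x)
    (hfa : Tendsto f (𝓝[>] a) (𝓝 0)) (hga : Tendsto g (𝓝[>] a) (𝓝 0))
    (hg' : ∀ x ∈ Ioo a b, 0 < g' x) (hmono : StrictMonoOn (fun x => f' x / g' x) (Ioo a b)) :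
    StrictMonoOn (fun x => f x / g x) (Ioo a b) := by
  intro x hx y hy hxy
  have hg_mono := strictMonoOn_Ioo_of_hasDerivAt_pos hgg' hg'
  have hgx : 0 < g x := hg_mono.lt_of_tendsto_nhdsGT hga hx
  have hgxy : g x < g y := hg_mono hx hy hxy
  have hIxy : Icc x y ⊆ Ioo a b := Icc_subset_Ioo hx.1 hy.2
  have hIax : Ioo a x ⊆ Ioo a b := Ioo_subset_Ioo_right hx.2.le
  -- Cauchy's mean value theorem on `(a, x)` and on `(x, y)` bounds `f x / g x` by
  -- `(f y - f x) / (g y - g x)`; the mediant of these two is `f y / g y`.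
  obtain ⟨c, hc, hc_eq⟩ := exists_ratio_hasDerivAt_eq_ratio_slope' f f' hx.1 g g'
    (lfb := f x) (lgb := g x)
    (fun t ht => hff' t (hIax ht)) (fun t ht => hgg' t (hIax ht)) hfa hga
    ((hff' x hx).continuousAt.tendsto.mono_left nhdsWithin_le_nhds)
    ((hgg' x hx).continuousAt.tendsto.mono_left nhdsWithin_le_nhds)
  obtain ⟨d, hd, hd_eq⟩ := exists_ratio_hasDerivAt_eq_ratio_slope f f' hxy
    (fun t ht => (hff' t (hIxy ht)).continuousAt.continuousWithinAt)
    (fun t ht => hff' t (hIxy (Ioo_subset_Icc_self ht))) g g'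
    (fun t ht => (hgg' t (hIxy ht)).continuousAt.continuousWithinAt)
    (fun t ht => hgg' t (hIxy (Ioo_subset_Icc_self ht)))
  have hcd := hmono (hIax hc) (hIxy (Ioo_subset_Icc_self hd)) (hc.2.trans hd.1)
  have hc_ratio : f x / g x = f' c / g' c := by
    rw [div_eq_div_iff hgx.ne' (hg' c (hIax hc)).ne']; linarith
  have hd_ratio : (f y - f x) / (g y - g x) = f' d / g' d := by
    rw [div_eq_div_iff (sub_pos.2 hgxy).ne' (hg' d (hIxy (Ioo_subset_Icc_self hd))).ne']
    linarith
  have key : f x / g x < (f y - f x) / (g y - g x) := by rw [hc_ratio, hd_ratio]; exact hcd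
  rw [div_lt_div_iff₀ hgx (sub_pos.2 hgxy)] at key
  rw [div_lt_div_iff₀ hgx (hgx.trans hgxy)]
  linarith

theorem strictMonoOn_div_pow_succ {a b : ℝ} {N N' : ℝ → ℝ} (m : ℕ)
    (hN : ∀ x ∈ Ioo a b, HasDerivAt N (N' x) x) (h0 : Tendsto N (𝓝[>] a) (𝓝 0))
    (hmono : StrictMonoOn (fun x => N' x / (x - a) ^ m) (Ioo a b)) :
    StrictMonoOn (fun x => N x / (x - a) ^ (m + 1)) (Ioo a b) := by
  have hpow (x : ℝ) : HasDerivAt (fun t => (t - a) ^ (m + 1)) ((m + 1) * (x - a) ^ m) x := by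
    simpa using (hasDerivAt_pow (m + 1) (x - a)).comp_sub_const x a
  refine strictMonoOn_div_of_strictMonoOn_deriv_div hN (fun x _ => hpow x) h0 ?_
    (fun x hx => by have := sub_pos.2 hx.1; positivity) fun x hx y hy hxy => ?_
  · have hcont : Continuous fun t => (t - a) ^ (m + 1) := by fun_prop
    exact (hcont.tendsto' a 0 (by simp)).mono_left nhdsWithin_le_nhds
  · simp only [div_mul_eq_div_div_swap]
    exact div_lt_div_of_pos_right (hmono hx hy hxy) (by positivity)

/-- With `c k = f⁽ᵏ⁾(a+)`, `taylorSum c a (n + 1)` is the paper's `Tₙ`, and `𝕋ₙ` is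
`taylorSum c a n` plus a multiple of `(x - a) ^ n`. -/
noncomputable def taylorSum (c : ℕ → ℝ) (a : ℝ) (m : ℕ) (x : ℝ) : ℝ :=
  ∑ k ∈ Finset.range m, c k / (k ! : ℝ) * (x - a) ^ k

theorem continuous_taylorSum (c : ℕ → ℝ) (a : ℝ) (m : ℕ) : Continuous (taylorSum c a m) := by
  unfold taylorSum; fun_prop

theorem taylorSum_succ_self (c : ℕ → ℝ) (a : ℝ) (m : ℕ) : taylorSum c a (m + 1) a = c 0 := by
  simp [taylorSum, Finset.sum_range_succ']

theorem taylorSum_succ (c : ℕ → ℝ) (a : ℝ) (m : ℕ) (x : ℝ) :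
    taylorSum c a (m + 1) x = taylorSum c a m x + c m / (m ! : ℝ) * (x - a) ^ m :=
  Finset.sum_range_succ _ _

theorem hasDerivAt_taylorSum (c : ℕ → ℝ) (a : ℝ) (m : ℕ) (x : ℝ) :
    HasDerivAt (taylorSum c a (m + 1)) (taylorSum (fun k => c (k + 1)) a m x) x := by
  induction m with
  | zero =>
    have hconst : taylorSum c a 1 = fun _ => c 0 := funext fun t => by simp [taylorSum]
    simpa [hconst, taylorSum] using hasDerivAt_const x (c 0)
  | succ m ih =>
    have hterm : HasDerivAt (fun t => c (m + 1) / ((m + 1) ! : ℝ) * (t - a) ^ (m + 1))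
        (c (m + 1) / (m ! : ℝ) * (x - a) ^ m) x := by
      refine (((hasDerivAt_pow (m + 1) (x - a)).comp_sub_const x a).const_mul
        (c (m + 1) / ((m + 1) ! : ℝ))).congr_deriv ?_
      rw [Nat.factorial_succ]
      push_cast
      field_simp
    rw [funext (taylorSum_succ c a (m + 1)), taylorSum_succ]
    exact ih.add hterm

theorem tendsto_sub_taylorSum {f : ℝ → ℝ} {c : ℕ → ℝ} {a : ℝ} (m : ℕ)
    (hf : Tendsto f (𝓝[>] a) (𝓝 (c 0))) :
    Tendsto (fun x => f x - taylorSum c a (m + 1) x) (𝓝[>] a) (𝓝 0) := by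
  have hT := ((continuous_taylorSum c a (m + 1)).tendsto a).mono_left
    (nhdsWithin_le_nhds (s := Ioi a))
  simpa [taylorSum_succ_self] using hf.sub hT

section IteratedDeriv

variable {a b : ℝ}

theorem hasDerivAt_of_differentiableOn_iteratedDeriv {n : ℕ} {f : ℝ → ℝ} (hn : 0 < n)
    (hdiff : ∀ k < n, DifferentiableOn ℝ (iteratedDeriv k f) (Ioo a b)) :
    ∀ x ∈ Ioo a b, HasDerivAt f (deriv f x) x := by
  intro x hx
  have hf : DifferentiableOn ℝ f (Ioo a b) := by simpa using hdiff 0 hn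
  exact (hf.differentiableAt (Ioo_mem_nhds hx.1 hx.2)).hasDerivAt

theorem taylorSum_lt_of_strictMonoOn_iteratedDeriv (n : ℕ) {f : ℝ → ℝ} {c : ℕ → ℝ}
    (hdiff : ∀ k < n, DifferentiableOn ℝ (iteratedDeriv k f) (Ioo a b))
    (hlim : ∀ k ≤ n, Tendsto (iteratedDeriv k f) (𝓝[>] a) (𝓝 (c k)))
    (hmono : StrictMonoOn (iteratedDeriv n f) (Ioo a b)) :
    ∀ x ∈ Ioo a b, taylorSum c a (n + 1) x < f x := by
  induction n generalizing f c with
  | zero =>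
    intro x hx
    simp only [iteratedDeriv_zero] at hlim hmono
    simpa [taylorSum] using hmono.lt_of_tendsto_nhdsGT (hlim 0 le_rfl) hx
  | succ n ih =>
    have hf := hasDerivAt_of_differentiableOn_iteratedDeriv n.succ_pos hdiff
    have hf' := ih (f := deriv f) (c := fun k => c (k + 1))
      (fun k hk => by simpa only [iteratedDeriv_succ'] using hdiff (k + 1) (by omega))
      (fun k hk => by simpa only [iteratedDeriv_succ'] using hlim (k + 1) (by omega))
      (by simpa only [iteratedDeriv_succ'] using hmono)
    have hrem := strictMonoOn_Ioo_of_hasDerivAt_pos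
      (fun x hx => (hf x hx).sub (hasDerivAt_taylorSum c a (n + 1) x))
      (fun x hx => sub_pos.2 (hf' x hx))
    intro x hx
    have := hrem.lt_of_tendsto_nhdsGT
      (tendsto_sub_taylorSum (n + 1) (iteratedDeriv_zero (f := f) ▸ hlim 0 (by omega))) hx
    exact sub_pos.1 this

theorem strictMonoOn_sub_taylorSum_div_pow (n : ℕ) {f : ℝ → ℝ} {c : ℕ → ℝ}
    (hdiff : ∀ k < n, DifferentiableOn ℝ (iteratedDeriv k f) (Ioo a b))
    (hlim : ∀ k < n, Tendsto (iteratedDeriv k f) (𝓝[>] a) (𝓝 (c k)))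
    (hmono : StrictMonoOn (iteratedDeriv n f) (Ioo a b)) :
    StrictMonoOn (fun x => (f x - taylorSum c a n x) / (x - a) ^ n) (Ioo a b) := by
  induction n generalizing f c with
  | zero => simpa [taylorSum] using hmono
  | succ n ih =>
    have hf := hasDerivAt_of_differentiableOn_iteratedDeriv n.succ_pos hdiff
    refine strictMonoOn_div_pow_succ n
      (fun x hx => (hf x hx).sub (hasDerivAt_taylorSum c a n x))
      (tendsto_sub_taylorSum n (iteratedDeriv_zero (f := f) ▸ hlim 0 (by omega))) ?_
    exact ih (f := deriv f) (c := fun k => c (k + 1))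
      (fun k hk => by simpa only [iteratedDeriv_succ'] using hdiff (k + 1) (by omega))
      (fun k hk => by simpa only [iteratedDeriv_succ'] using hlim (k + 1) (by omega))
      (by simpa only [iteratedDeriv_succ'] using hmono)

end IteratedDeriv

theorem double_sided_taylor_increasing_general
    (a b : ℝ) (hab : a < b) (f : ℝ → ℝ) (n : ℕ)
    (hdiff : ∀ k < n, DifferentiableOn ℝ (iteratedDeriv k f) (Ioo a b))
    (la : ℕ → ℝ)
    (hla : ∀ k ≤ n, Tendsto (iteratedDeriv k f) (nhdsWithin a (Ioo a b)) (nhds (la k)))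
    (lb : ℝ)
    (hlb : Tendsto f (nhdsWithin b (Ioo a b)) (nhds lb))
    (hmono : StrictMonoOn (iteratedDeriv n f) (Ioo a b)) :
    ∀ x ∈ Ioo a b,
      (∑ k ∈ Finset.range (n + 1), la k / (Nat.factorial k : ℝ) * (x - a) ^ k) < f x ∧
      f x < (∑ k ∈ Finset.range n, la k / (Nat.factorial k : ℝ) * (x - a) ^ k) +
        (lb - ∑ k ∈ Finset.range n, la k / (Nat.factorial k : ℝ) * (b - a) ^ k) *
          ((x - a) / (b - a)) ^ n := by
  rw [nhdsWithin_Ioo_eq_nhdsGT hab] at hla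
  rw [nhdsWithin_Ioo_eq_nhdsLT hab] at hlb
  intro x hx
  refine ⟨taylorSum_lt_of_strictMonoOn_iteratedDeriv n hdiff hla hmono x hx, ?_⟩
  have hq := strictMonoOn_sub_taylorSum_div_pow n hdiff (fun k hk => hla k hk.le) hmono
  have hpow : Continuous fun t => (t - a) ^ n := by fun_prop
  have hq_lim :=
    (hlb.sub (((continuous_taylorSum la a n).tendsto b).mono_left nhdsWithin_le_nhds)).div
      ((hpow.tendsto b).mono_left nhdsWithin_le_nhds) (pow_ne_zero n (sub_pos.2 hab).ne')
  have hq_lt := hq.lt_of_tendsto_nhdsLT hq_lim hx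
  rw [div_lt_div_iff₀ (pow_pos (sub_pos.2 hx.1) n) (pow_pos (sub_pos.2 hab) n)] at hq_lt
  change f x < taylorSum la a n x + (lb - taylorSum la a n b) * ((x - a) / (b - a)) ^ n
  rw [div_pow, mul_div_assoc', ← sub_lt_iff_lt_add', lt_div_iff₀ (pow_pos (sub_pos.2 hab) n)]
  exact hq_lt

theorem double_sided_taylor_increasing
    (a b : ℝ) (hab : a < b) (f : ℝ → ℝ) (n : ℕ) (hn : 0 < n)
    (hdiff : ∀ k < n, DifferentiableOn ℝ (iteratedDeriv k f) (Ioo a b))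
    (la : ℕ → ℝ)
    (hla : ∀ k ≤ n, Tendsto (iteratedDeriv k f) (nhdsWithin a (Ioo a b)) (nhds (la k)))
    (lb : ℝ)
    (hlb : Tendsto f (nhdsWithin b (Ioo a b)) (nhds lb))
    (hmono : StrictMonoOn (iteratedDeriv n f) (Ioo a b)) :
    ∀ x ∈ Ioo a b,
      (∑ k ∈ Finset.range (n + 1), la k / (Nat.factorial k : ℝ) * (x - a) ^ k) < f x ∧
      f x < (∑ k ∈ Finset.range n, la k / (Nat.factorial k : ℝ) * (x - a) ^ k) +
        (lb - ∑ k ∈ Finset.range n, la k / (Nat.factorial k : ℝ) * (b - a) ^ k) *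
          ((x - a) / (b - a)) ^ n :=
  double_sided_taylor_increasing_general a b hab f n hdiff la hla lb hlb hmono
end

section
/- Let a < b be real numbers and let f : (a,b) → ℝ be a function such that for each k ∈ {0, 1, ..., n+1} the one-sided limit f^{(k)}(a+) = lim_{x→a+} f^{(k)}(x) exists and is finite (f being n+1 times differentiable on (a,b)), and the one-sided limit f(b-) = lim_{x→b-} f(x) exists and is finite. Then for all x ∈ (a,b): sgn(𝕋_n(x) - 𝕋_{n+1}(x)) = sgn(f(b-) - T_n(b)), where T_n(x) = Σ_{k=0}^{n} f^{(k)}(a+)/k! (x-a)^k and, for m ≥ 1, 𝕋_m(x) = T_{m-1}(x) + (f(b-) - T_{m-1}(b))·((x-a)/(b-a))^m, with 𝕋_0(x) = f(b-). -/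
/-!
With `t = (x - a)/(b - a)`, passing from `𝕋ₙ` to `𝕋ₙ₊₁` adds the term `cₙ/n! (x - a)ⁿ = cₙ/n! (b - a)ⁿ tⁿ`
to the polynomial part and changes the correction term accordingly; everything cancels except
`(f(b-) - Tₙ(b)) tⁿ (1 - t)`, and `tⁿ (1 - t) > 0` for `x ∈ (a, b)`.
-/

open Real Set Filter Nat

section SecondTaylor

variable {𝕜 : Type*} [Field 𝕜]

/-- `taylorPartialSum c a n` is the paper's `T_{n-1}` for the coefficients `c k = f⁽ᵏ⁾(a+)`. -/
def taylorPartialSum (c : ℕ → 𝕜) (a : 𝕜) (n : ℕ) (x : 𝕜) : 𝕜 :=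
  ∑ k ∈ Finset.range n, c k / (k ! : 𝕜) * (x - a) ^ k

/-- The paper's `𝕋ₙ` with `y = f(b-)`; for `n = 0` the empty sum makes it the constant `y`. -/
def secondTaylor (c : ℕ → 𝕜) (a b y : 𝕜) (n : ℕ) (x : 𝕜) : 𝕜 :=
  taylorPartialSum c a n x + (y - taylorPartialSum c a n b) * ((x - a) / (b - a)) ^ n

theorem secondTaylor_sub_secondTaylor_succ (c : ℕ → 𝕜) {a b : 𝕜} (hab : a ≠ b) (y : 𝕜) (n : ℕ)
    (x : 𝕜) :
    secondTaylor c a b y n x - secondTaylor c a b y (n + 1) x =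
      (y - taylorPartialSum c a (n + 1) b) *
        (((x - a) / (b - a)) ^ n * (1 - (x - a) / (b - a))) := by
  have hba : b - a ≠ 0 := sub_ne_zero.mpr hab.symm
  unfold secondTaylor taylorPartialSum
  set t := (x - a) / (b - a)
  have hx : x - a = (b - a) * t := (mul_div_cancel₀ _ hba).symm
  rw [Finset.sum_range_succ, Finset.sum_range_succ, hx, mul_pow]
  ring

end SecondTaylor

theorem Real.sign_mul_of_pos (r : ℝ) {p : ℝ} (hp : 0 < p) : Real.sign (r * p) = Real.sign r := by
  rcases lt_trichotomy r 0 with hr | rfl | hr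
  · rw [sign_of_neg hr, sign_of_neg (mul_neg_of_neg_of_pos hr hp)]
  · rw [zero_mul]
  · rw [sign_of_pos hr, sign_of_pos (mul_pos hr hp)]

theorem sign_second_taylor_difference_general
    (a b : ℝ) (hab : a < b) (n : ℕ)
    (la : ℕ → ℝ)
    (lb : ℝ) :
    ∀ x ∈ Ioo a b,
      Real.sign
        (((∑ k ∈ Finset.range n, la k / (Nat.factorial k : ℝ) * (x - a) ^ k) +
            (lb - ∑ k ∈ Finset.range n, la k / (Nat.factorial k : ℝ) * (b - a) ^ k) *
              ((x - a) / (b - a)) ^ n) -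
         ((∑ k ∈ Finset.range (n + 1), la k / (Nat.factorial k : ℝ) * (x - a) ^ k) +
            (lb - ∑ k ∈ Finset.range (n + 1), la k / (Nat.factorial k : ℝ) * (b - a) ^ k) *
              ((x - a) / (b - a)) ^ (n + 1))) =
      Real.sign (lb - ∑ k ∈ Finset.range (n + 1), la k / (Nat.factorial k : ℝ) * (b - a) ^ k) := by
  rintro x ⟨hax, hxb⟩
  have hba : 0 < b - a := sub_pos.mpr hab
  have ht_pos : 0 < (x - a) / (b - a) := div_pos (sub_pos.mpr hax) hba
  have ht_lt_one : (x - a) / (b - a) < 1 := (div_lt_one hba).mpr (by linarith)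
  change Real.sign (secondTaylor la a b lb n x - secondTaylor la a b lb (n + 1) x) =
    Real.sign (lb - taylorPartialSum la a (n + 1) b)
  rw [secondTaylor_sub_secondTaylor_succ la hab.ne lb n x]
  exact Real.sign_mul_of_pos _ (mul_pos (pow_pos ht_pos n) (sub_pos.mpr ht_lt_one))

theorem sign_second_taylor_difference
    (a b : ℝ) (hab : a < b) (f : ℝ → ℝ) (n : ℕ)
    (hdiff : ∀ k < n + 1, DifferentiableOn ℝ (iteratedDeriv k f) (Ioo a b))
    (la : ℕ → ℝ)
    (hla : ∀ k ≤ n + 1, Tendsto (iteratedDeriv k f) (nhdsWithin a (Ioo a b)) (nhds (la k)))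
    (lb : ℝ)
    (hlb : Tendsto f (nhdsWithin b (Ioo a b)) (nhds lb)) :
    ∀ x ∈ Ioo a b,
      Real.sign
        (((∑ k ∈ Finset.range n, la k / (Nat.factorial k : ℝ) * (x - a) ^ k) +
            (lb - ∑ k ∈ Finset.range n, la k / (Nat.factorial k : ℝ) * (b - a) ^ k) *
              ((x - a) / (b - a)) ^ n) -
         ((∑ k ∈ Finset.range (n + 1), la k / (Nat.factorial k : ℝ) * (x - a) ^ k) +
            (lb - ∑ k ∈ Finset.range (n + 1), la k / (Nat.factorial k : ℝ) * (b - a) ^ k) *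
              ((x - a) / (b - a)) ^ (n + 1))) =
      Real.sign (lb - ∑ k ∈ Finset.range (n + 1), la k / (Nat.factorial k : ℝ) * (b - a) ^ k) :=
  sign_second_taylor_difference_general a b hab n la lb
end

section
/- Let a < b be real numbers and let f : (a,b) → ℝ be given by a power series f(x) = Σ_{k=0}^{∞} c_k (x-a)^k with real coefficients c_k ≥ 0 for all k, where the series Σ_{k=0}^{∞} c_k (b-a)^k converges to a finite value L (so that f(b-) = L). Then for every n ∈ ℕ and every x ∈ (a,b): T_n(x) ≤ T_{n+1}(x) ≤ f(x) ≤ 𝕋_{n+1}(x) ≤ 𝕋_n(x), where T_n(x) = Σ_{k=0}^{n} c_k (x-a)^k and 𝕋_m(x) = T_{m-1}(x) + (L - T_{m-1}(b))·((x-a)/(b-a))^m for m ≥ 1, with 𝕋_0(x) = L. -/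
/-!
Put `t = x - a`, `r = b - a` and `q = t / r ∈ [0, 1]`, so that `c k * t ^ k = c k * r ^ k * q ^ k`.
The lower bounds hold because the terms are nonnegative. For the upper bound, each term of the
tail `∑_{k ≥ m} c k * t ^ k` is at most `q ^ m` times the corresponding term of the tail
`L - T_{m-1}(b)`, since `q ^ k ≤ q ^ m` for `k ≥ m`. Finally `𝕋_{m+1} ≤ 𝕋_m` reduces to
`(L - T_m(b)) * q ^ (m + 1) ≤ (L - T_m(b)) * q ^ m`.
-/

open Real Set Finset

/-- The second Taylor approximation `𝕋_m` at the point `a + t` of a series `∑ c k * (x - a) ^ k`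
with sum `L` at `b = a + r`. -/
noncomputable def taylorUpper (c : ℕ → ℝ) (L r t : ℝ) (m : ℕ) : ℝ :=
  ∑ k ∈ range m, c k * t ^ k + (L - ∑ k ∈ range m, c k * r ^ k) * (t / r) ^ m

lemma pow_eq_pow_mul_div_pow {r t : ℝ} (h : r = 0 → t = 0) (m : ℕ) :
    t ^ m = r ^ m * (t / r) ^ m := by
  rw [← mul_pow, mul_div_cancel_of_imp' h]

section NonnegCoeffs

variable {c : ℕ → ℝ} {L r t : ℝ}

lemma le_taylorUpper (hc : ∀ k, 0 ≤ c k) (ht : 0 ≤ t) (htr : t ≤ r)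
    (hL : HasSum (fun k ↦ c k * r ^ k) L) {S : ℝ} (hS : HasSum (fun k ↦ c k * t ^ k) S)
    (m : ℕ) : S ≤ taylorUpper c L r t m := by
  have hr : r = 0 → t = 0 := fun h ↦ le_antisymm (h ▸ htr) ht
  have hq : 0 ≤ t / r := div_nonneg ht (ht.trans htr)
  have hq1 : t / r ≤ 1 := div_le_one_of_le₀ htr (ht.trans htr)
  have tail_le : S - ∑ k ∈ range m, c k * t ^ k ≤
      (t / r) ^ m * (L - ∑ k ∈ range m, c k * r ^ k) := by
    refine hasSum_le (fun k ↦ ?_) ((hasSum_nat_add_iff' m).mpr hS)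
      (((hasSum_nat_add_iff' m).mpr hL).mul_left _)
    have hrk : 0 ≤ c (k + m) * r ^ (k + m) := mul_nonneg (hc _) (pow_nonneg (ht.trans htr) _)
    calc c (k + m) * t ^ (k + m) = c (k + m) * r ^ (k + m) * (t / r) ^ (k + m) := by
          rw [pow_eq_pow_mul_div_pow hr, mul_assoc]
      _ ≤ c (k + m) * r ^ (k + m) * (t / r) ^ m :=
          mul_le_mul_of_nonneg_left (pow_le_pow_of_le_one hq hq1 (by omega)) hrk
      _ = (t / r) ^ m * (c (k + m) * r ^ (k + m)) := mul_comm _ _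
  unfold taylorUpper
  linarith

lemma taylorUpper_succ_le (hc : ∀ k, 0 ≤ c k) (ht : 0 ≤ t) (htr : t ≤ r)
    (hL : HasSum (fun k ↦ c k * r ^ k) L) (m : ℕ) :
    taylorUpper c L r t (m + 1) ≤ taylorUpper c L r t m := by
  have hq : 0 ≤ t / r := div_nonneg ht (ht.trans htr)
  have hq1 : t / r ≤ 1 := div_le_one_of_le₀ htr (ht.trans htr)
  have hR : 0 ≤ L - ∑ k ∈ range (m + 1), c k * r ^ k :=
    sub_nonneg.mpr (sum_le_hasSum _ (fun k _ ↦ mul_nonneg (hc k) (pow_nonneg (ht.trans htr) k)) hL)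
  have hqm : (t / r) ^ (m + 1) ≤ (t / r) ^ m := pow_le_pow_of_le_one hq hq1 m.le_succ
  have htm : t ^ m = r ^ m * (t / r) ^ m :=
    pow_eq_pow_mul_div_pow (fun h ↦ le_antisymm (h ▸ htr) ht) m
  unfold taylorUpper
  rw [sum_range_succ _ m] at hR
  rw [sum_range_succ _ m, sum_range_succ _ m, htm]
  nlinarith [mul_le_mul_of_nonneg_left hqm hR]

end NonnegCoeffs

theorem double_sided_taylor_nonneg_coeffs_general
    (a b : ℝ) (c : ℕ → ℝ) (hc : ∀ k, 0 ≤ c k)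
    (f : ℝ → ℝ) (L : ℝ)
    (hL : HasSum (fun k : ℕ => c k * (b - a) ^ k) L)
    (hf : ∀ x ∈ Ioo a b, HasSum (fun k : ℕ => c k * (x - a) ^ k) (f x)) :
    ∀ n : ℕ, ∀ x ∈ Ioo a b,
      (∑ k ∈ Finset.range (n + 1), c k * (x - a) ^ k) ≤
        (∑ k ∈ Finset.range (n + 2), c k * (x - a) ^ k) ∧
      (∑ k ∈ Finset.range (n + 2), c k * (x - a) ^ k) ≤ f x ∧
      f x ≤ (∑ k ∈ Finset.range (n + 1), c k * (x - a) ^ k) +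
        (L - ∑ k ∈ Finset.range (n + 1), c k * (b - a) ^ k) * ((x - a) / (b - a)) ^ (n + 1) ∧
      (∑ k ∈ Finset.range (n + 1), c k * (x - a) ^ k) +
        (L - ∑ k ∈ Finset.range (n + 1), c k * (b - a) ^ k) * ((x - a) / (b - a)) ^ (n + 1) ≤
      (∑ k ∈ Finset.range n, c k * (x - a) ^ k) +
        (L - ∑ k ∈ Finset.range n, c k * (b - a) ^ k) * ((x - a) / (b - a)) ^ n := by
  intro n x hx
  have ht : 0 ≤ x - a := by linarith [hx.1]
  have htr : x - a ≤ b - a := by linarith [hx.2]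
  have hterm : ∀ k, 0 ≤ c k * (x - a) ^ k := fun k ↦ mul_nonneg (hc k) (pow_nonneg ht k)
  refine ⟨?_, sum_le_hasSum _ (fun k _ ↦ hterm k) (hf x hx),
    le_taylorUpper hc ht htr hL (hf x hx) (n + 1), taylorUpper_succ_le hc ht htr hL n⟩
  rw [sum_range_succ _ (n + 1)]
  exact le_add_of_nonneg_right (hterm _)

theorem double_sided_taylor_nonneg_coeffs
    (a b : ℝ) (hab : a < b) (c : ℕ → ℝ) (hc : ∀ k, 0 ≤ c k)
    (f : ℝ → ℝ) (L : ℝ)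
    (hL : HasSum (fun k : ℕ => c k * (b - a) ^ k) L)
    (hf : ∀ x ∈ Ioo a b, HasSum (fun k : ℕ => c k * (x - a) ^ k) (f x)) :
    ∀ n : ℕ, ∀ x ∈ Ioo a b,
      (∑ k ∈ Finset.range (n + 1), c k * (x - a) ^ k) ≤
        (∑ k ∈ Finset.range (n + 2), c k * (x - a) ^ k) ∧
      (∑ k ∈ Finset.range (n + 2), c k * (x - a) ^ k) ≤ f x ∧
      f x ≤ (∑ k ∈ Finset.range (n + 1), c k * (x - a) ^ k) +
        (L - ∑ k ∈ Finset.range (n + 1), c k * (b - a) ^ k) * ((x - a) / (b - a)) ^ (n + 1) ∧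
      (∑ k ∈ Finset.range (n + 1), c k * (x - a) ^ k) +
        (L - ∑ k ∈ Finset.range (n + 1), c k * (b - a) ^ k) * ((x - a) / (b - a)) ^ (n + 1) ≤
      (∑ k ∈ Finset.range n, c k * (x - a) ^ k) +
        (L - ∑ k ∈ Finset.range n, c k * (b - a) ^ k) * ((x - a) / (b - a)) ^ n :=
  double_sided_taylor_nonneg_coeffs_general a b c hc f L hL hf
end

section
/- For every c ∈ (0, π) and every x ∈ (0, c): 3/8 ≤ (1 - cos x / cos(x/2)) / x² ≤ (1 - cos c / cos(c/2)) / c². -/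
/-!
With `u = cos (x / 2)` one has `1 - cos x / cos (x / 2) = (1 - u) (2u + 1) / u`. The derivative
of the ratio has the sign of `t sin t (2 cos² t + 1) - 2 cos t (2 cos t + 1) (1 - cos t)` at
`t = x / 2`, which is nonnegative by the Cusa–Huygens inequality `3 sin t ≤ t (2 + cos t)`; this
gives monotonicity. The lower bound `3 / 8` (the limit at `0`) follows from the Taylor bounds
`1 - t²/2 ≤ cos t ≤ 1 - t²/2 + t⁴/24`.
-/

open Real Set

namespace Real

lemma cos_eq_two_mul_cos_half_sq_sub_one (x : ℝ) : cos x = 2 * cos (x / 2) ^ 2 - 1 := by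
  rw [← cos_two_mul, mul_div_cancel₀ x two_ne_zero]

lemma sq_sub_pow_four_div_three_le_sin_sq (x : ℝ) : x ^ 2 - x ^ 4 / 3 ≤ sin x ^ 2 := by
  wlog hx : 0 ≤ x generalizing x
  · have h := this (-x) (by linarith)
    rwa [sin_neg, neg_sq, neg_sq, show (-x) ^ 4 = x ^ 4 by ring] at h
  rcases le_total (x ^ 2) 3 with hx3 | hx3
  · have hcube : 0 ≤ x - x ^ 3 / 6 := by nlinarith
    nlinarith [pow_le_pow_left₀ hcube (sin_ge_sub_cube hx) 2, sq_nonneg (x ^ 3)]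
  · nlinarith [sq_nonneg (sin x)]

lemma cos_le_one_sub_sq_div_two_add_pow_four_div (x : ℝ) :
    cos x ≤ 1 - x ^ 2 / 2 + x ^ 4 / 24 := by
  have hcos : cos x = 1 - 2 * sin (x / 2) ^ 2 := by
    rw [← cos_two_mul_eq_one_sub, mul_div_cancel₀ x two_ne_zero]
  rw [hcos]
  linear_combination 2 * sq_sub_pow_four_div_three_le_sin_sq (x / 2)

lemma three_mul_sin_le_mul_two_add_cos {x : ℝ} (hx : 0 ≤ x) : 3 * sin x ≤ x * (2 + cos x) := by
  rcases le_total x π with hxπ | hπx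
  · have hmono : MonotoneOn (fun y => y * (2 + cos y) - 3 * sin y) (Icc 0 π) := by
      refine monotoneOn_of_hasDerivWithinAt_nonneg (f' := fun y => 2 - 2 * cos y - y * sin y)
        (convex_Icc 0 π) (by fun_prop) (fun y _ => ?_) (fun y hy => ?_)
      · refine (((hasDerivAt_id y).mul ((hasDerivAt_const y 2).add (hasDerivAt_cos y))).sub
          ((hasDerivAt_sin y).const_mul 3)).hasDerivWithinAt.congr_deriv ?_
        simp only [id, Pi.add_apply]
        ring
      · rw [interior_Icc] at hy
        obtain ⟨hy0, hyπ⟩ := hy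
        have hcos : 0 < cos (y / 2) := cos_pos_of_mem_Ioo ⟨by linarith, by linarith⟩
        have hsin : 0 < sin (y / 2) := sin_pos_of_pos_of_lt_pi (by linarith) (by linarith)
        have htan : y / 2 * cos (y / 2) ≤ sin (y / 2) := by
          rw [← le_div_iff₀ hcos, ← tan_eq_sin_div_cos]
          exact le_tan (by linarith) (by linarith)
        have hderiv : 2 - 2 * cos y - y * sin y
            = 4 * sin (y / 2) * (sin (y / 2) - y / 2 * cos (y / 2)) := by
          conv_lhs => rw [← mul_div_cancel₀ y two_ne_zero, cos_two_mul_eq_one_sub, sin_two_mul]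
          ring
        rw [hderiv]
        exact mul_nonneg (by positivity) (by linarith)
    simpa using hmono ⟨le_rfl, pi_pos.le⟩ ⟨hx, hxπ⟩ hx
  · nlinarith [sin_le_one x, neg_one_le_cos x, pi_gt_three]

end Real

lemma sandor_deriv_numerator_nonneg {t : ℝ} (h0 : 0 ≤ t) (hπ : t ≤ π / 2) :
    0 ≤ t * sin t * (2 * cos t ^ 2 + 1) - 2 * cos t * (2 * cos t + 1) * (1 - cos t) := by
  have hcos : 0 ≤ cos t := cos_nonneg_of_mem_Icc ⟨by linarith [pi_pos], hπ⟩
  have hsin : 0 ≤ sin t := sin_nonneg_of_nonneg_of_le_pi h0 (by linarith [pi_pos])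
  have hpyth : sin t ^ 2 = 1 - cos t ^ 2 := by rw [← sin_sq_add_cos_sq t]; ring
  have hquad : 0 ≤ 3 + 2 * cos t - 2 * cos t ^ 2 := by nlinarith [cos_le_one t]
  have hscaled : 2 * cos t * (2 * cos t + 1) * (1 - cos t) * (2 + cos t)
      ≤ t * sin t * (2 * cos t ^ 2 + 1) * (2 + cos t) :=
    calc 2 * cos t * (2 * cos t + 1) * (1 - cos t) * (2 + cos t)
        ≤ 3 * (1 - cos t ^ 2) * (2 * cos t ^ 2 + 1) := by
          nlinarith [mul_nonneg (sq_nonneg (1 - cos t)) hquad]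
      _ = 3 * sin t * (sin t * (2 * cos t ^ 2 + 1)) := by rw [← hpyth]; ring
      _ ≤ t * (2 + cos t) * (sin t * (2 * cos t ^ 2 + 1)) :=
          mul_le_mul_of_nonneg_right (three_mul_sin_le_mul_two_add_cos h0) (by positivity)
      _ = t * sin t * (2 * cos t ^ 2 + 1) * (2 + cos t) := by ring
  exact sub_nonneg.2 (le_of_mul_le_mul_right hscaled (by linarith))

lemma three_div_two_mul_sq_mul_cos_le {t : ℝ} (ht : t ^ 2 ≤ 6) :
    3 / 2 * t ^ 2 * cos t ≤ (1 - cos t) * (2 * cos t + 1) := by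
  have hcos_le := cos_le_one_sub_sq_div_two_add_pow_four_div t
  have hle_cos := one_sub_sq_div_two_le_cos (x := t)
  -- With `v = 1 - cos t ≥ v₀ = t²/2 - t⁴/24`, the difference of the two sides exceeds its value at
  -- `v₀` by `(v - v₀) (3 + 3t²/2 - 2 (v + v₀))`, and that value is `t⁴ (36 + 6t² - t⁴) / 288`.
  nlinarith [mul_nonneg (by linarith : 0 ≤ (1 - cos t) - (t ^ 2 / 2 - t ^ 4 / 24))
      (by nlinarith : 0 ≤ 3 + 3 / 2 * t ^ 2 - 2 * ((1 - cos t) + (t ^ 2 / 2 - t ^ 4 / 24))),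
    mul_nonneg (sq_nonneg (t ^ 2)) (by nlinarith : 0 ≤ 36 + 6 * t ^ 2 - t ^ 4)]

noncomputable def sandorRatio (x : ℝ) : ℝ := (1 - cos x / cos (x / 2)) / x ^ 2

lemma three_div_eight_le_sandorRatio {x : ℝ} (hx0 : 0 < x) (hxπ : x < π) :
    3 / 8 ≤ sandorRatio x := by
  have hcos : 0 < cos (x / 2) := cos_pos_of_mem_Ioo ⟨by linarith [pi_pos], by linarith⟩
  have hcore := three_div_two_mul_sq_mul_cos_le (t := x / 2) (by nlinarith [pi_lt_four])
  have hfactor : 1 - (2 * cos (x / 2) ^ 2 - 1) / cos (x / 2)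
      = (1 - cos (x / 2)) * (2 * cos (x / 2) + 1) / cos (x / 2) := by
    field_simp
    ring
  rw [sandorRatio, cos_eq_two_mul_cos_half_sq_sub_one, hfactor, le_div_iff₀ (by positivity),
    le_div_iff₀ hcos]
  linear_combination hcore

lemma hasDerivAt_sandorRatio {x : ℝ} (hx0 : x ≠ 0) (hcos : cos (x / 2) ≠ 0) :
    HasDerivAt sandorRatio
      ((x / 2 * sin (x / 2) * (2 * cos (x / 2) ^ 2 + 1)
          - 2 * cos (x / 2) * (2 * cos (x / 2) + 1) * (1 - cos (x / 2)))
        / (cos (x / 2) ^ 2 * x ^ 3)) x := by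
  have hhalf : HasDerivAt (fun y => cos (y / 2)) (-sin (x / 2) * (1 / 2)) x :=
    ((hasDerivAt_id' x).div_const 2).cos
  refine ((((hasDerivAt_cos x).div hhalf hcos).const_sub 1).div (hasDerivAt_pow 2 x)
    (pow_ne_zero 2 hx0)).congr_deriv ?_
  have hsin : sin x = 2 * sin (x / 2) * cos (x / 2) := by
    rw [← sin_two_mul, mul_div_cancel₀ x two_ne_zero]
  simp only [Pi.div_apply]
  rw [cos_eq_two_mul_cos_half_sq_sub_one x, hsin]
  field_simp
  ring

lemma monotoneOn_sandorRatio : MonotoneOn sandorRatio (Ioo 0 π) := by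
  have hderiv : ∀ x ∈ Ioo 0 π, HasDerivAt sandorRatio _ x := fun x hx =>
    hasDerivAt_sandorRatio hx.1.ne'
      (cos_pos_of_mem_Ioo ⟨by linarith [pi_pos, hx.1], by linarith [hx.2]⟩).ne'
  refine monotoneOn_of_hasDerivWithinAt_nonneg (convex_Ioo 0 π)
    (fun x hx => (hderiv x hx).continuousAt.continuousWithinAt)
    (fun x hx => (hderiv x (interior_subset hx)).hasDerivWithinAt) (fun x hx => ?_)
  rw [interior_Ioo] at hx
  obtain ⟨hx0, hxπ⟩ := hx
  exact div_nonneg (sandor_deriv_numerator_nonneg (by linarith) (by linarith)) (by positivity)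

theorem sandor_first_endpoint (c : ℝ) (hc : c ∈ Ioo 0 π) (x : ℝ) (hx : x ∈ Ioo 0 c) :
    3 / 8 ≤ (1 - Real.cos x / Real.cos (x / 2)) / x ^ 2 ∧
    (1 - Real.cos x / Real.cos (x / 2)) / x ^ 2 ≤ (1 - Real.cos c / Real.cos (c / 2)) / c ^ 2 := by
  have hxπ : x < π := hx.2.trans hc.2
  exact ⟨three_div_eight_le_sandorRatio hx.1 hxπ,
    monotoneOn_sandorRatio ⟨hx.1, hxπ⟩ hc hx.2.le⟩
end

section
/- For every real number x with 0 < x < π/2: 3/8 + x²/128 ≤ (1 - cos x / cos(x/2)) / x² ≤ 3/8 + (16/π⁴ - 3/(2π²))·x² ≤ 4/π². -/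
/-!
With `c = cos (x / 2)` one has `1 - cos x / cos (x / 2) = 1 / c + 1 - 2 * c`, a decreasing function
of `c > 0`. The Taylor bounds `cos ≤ T₄` and `T₆ ≤ cos` (obtained by repeatedly integrating
`x - x³/6 ≤ sin x`) therefore reduce the lower bound, and the upper bound for `x ≤ 1.4`, to
polynomial inequalities. The constant `16 / π⁴ - 3 / (2π²)` is the one for which the upper bound is
an equality at `x = π / 2`, so near that endpoint Taylor polynomials at `0` are useless; there we
write `x / 2 = π / 4 - r` and use `cos (π / 4 - r) = (cos r + sin r) / √2` instead. Both sides of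
the upper bound then differ from their common value `1` at `r = 0` by `r` times a factor, and the
factors are separated by a margin. The last inequality is monotonicity in `x²`.
-/

open Real

theorem le_of_hasDerivAt_le {f g f' g' : ℝ → ℝ} {a x : ℝ} (hf : ∀ y, HasDerivAt f (f' y) y)
    (hg : ∀ y, HasDerivAt g (g' y) y) (ha : f a ≤ g a) (h' : ∀ y, a ≤ y → f' y ≤ g' y)
    (hx : a ≤ x) : f x ≤ g x :=
  image_le_of_deriv_right_le_deriv_boundary (fun y _ => (hf y).continuousAt.continuousWithinAt)
    (fun y _ => (hf y).hasDerivWithinAt) ha (fun y _ => (hg y).continuousAt.continuousWithinAt)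
    (fun y _ => (hg y).hasDerivWithinAt) (fun y hy => h' y hy.1) ⟨hx, le_rfl⟩

theorem cos_le_taylor4 {x : ℝ} (hx : 0 ≤ x) : cos x ≤ 1 - x ^ 2 / 2 + x ^ 4 / 24 := by
  refine le_of_hasDerivAt_le (g := fun x => 1 - x ^ 2 / 2 + x ^ 4 / 24)
    (g' := fun x => -(x - x ^ 3 / 6)) hasDerivAt_cos (fun y => ?_) (by norm_num)
    (fun y hy => by linarith [sin_ge_sub_cube hy]) hx
  exact ((((hasDerivAt_pow 2 y).div_const 2).const_sub 1).add
    ((hasDerivAt_pow 4 y).div_const 24)).congr_deriv (by norm_num; ring)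

theorem sin_le_taylor5 {x : ℝ} (hx : 0 ≤ x) : sin x ≤ x - x ^ 3 / 6 + x ^ 5 / 120 := by
  refine le_of_hasDerivAt_le (g := fun x => x - x ^ 3 / 6 + x ^ 5 / 120)
    (g' := fun x => 1 - x ^ 2 / 2 + x ^ 4 / 24) hasDerivAt_sin (fun y => ?_) (by norm_num)
    (fun y hy => cos_le_taylor4 hy) hx
  exact (((hasDerivAt_id' y).sub ((hasDerivAt_pow 3 y).div_const 6)).add
    ((hasDerivAt_pow 5 y).div_const 120)).congr_deriv (by norm_num; ring)

theorem taylor6_le_cos {x : ℝ} (hx : 0 ≤ x) :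
    1 - x ^ 2 / 2 + x ^ 4 / 24 - x ^ 6 / 720 ≤ cos x := by
  refine le_of_hasDerivAt_le (f := fun x => 1 - x ^ 2 / 2 + x ^ 4 / 24 - x ^ 6 / 720)
    (f' := fun x => -(x - x ^ 3 / 6 + x ^ 5 / 120)) (fun y => ?_) hasDerivAt_cos (by norm_num)
    (fun y hy => by linarith [sin_le_taylor5 hy]) hx
  exact (((((hasDerivAt_pow 2 y).div_const 2).const_sub 1).add
    ((hasDerivAt_pow 4 y).div_const 24)).sub
    ((hasDerivAt_pow 6 y).div_const 720)).congr_deriv (by norm_num; ring)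

noncomputable def halfAngleDefect (c : ℝ) : ℝ := 1 / c + 1 - 2 * c

theorem one_sub_cos_div_cos_half {x : ℝ} (hx : cos (x / 2) ≠ 0) :
    1 - cos x / cos (x / 2) = halfAngleDefect (cos (x / 2)) := by
  have hcos : cos x = 2 * cos (x / 2) ^ 2 - 1 := by rw [← cos_two_mul]; ring_nf
  rw [halfAngleDefect, hcos]
  field_simp
  ring

theorem halfAngleDefect_le_halfAngleDefect {a b : ℝ} (ha : 0 < a) (hab : a ≤ b) :
    halfAngleDefect b ≤ halfAngleDefect a := by
  have : 1 / b ≤ 1 / a := one_div_le_one_div_of_le ha hab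
  simp only [halfAngleDefect]
  linarith

theorem le_halfAngleDefect_iff {c y : ℝ} (hc : 0 < c) :
    y ≤ halfAngleDefect c ↔ y * c ≤ (1 - c) * (1 + 2 * c) := by
  rw [halfAngleDefect, ← le_div_iff₀ hc]
  congr! 1
  field_simp
  ring

theorem halfAngleDefect_le_iff {c y : ℝ} (hc : 0 < c) :
    halfAngleDefect c ≤ y ↔ (1 - c) * (1 + 2 * c) ≤ y * c := by
  rw [halfAngleDefect, ← div_le_iff₀ hc]
  congr! 1
  field_simp
  ring

theorem le_halfAngleDefect_taylor4 {t : ℝ} (ht : t ^ 2 ≤ 2) :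
    3 / 2 * t ^ 2 + t ^ 4 / 8 ≤ halfAngleDefect (1 - t ^ 2 / 2 + t ^ 4 / 24) := by
  have hpos : 0 < 1 - t ^ 2 / 2 + t ^ 4 / 24 := by nlinarith [sq_nonneg (t ^ 2)]
  rw [le_halfAngleDefect_iff hpos]
  nlinarith [mul_nonneg (pow_nonneg (sq_nonneg t) 3) (sub_nonneg.2 ht)]

theorem halfAngleDefect_taylor6_le {t κ : ℝ} (ht : t ^ 2 ≤ 1 / 2) (hκ : 3 / 16 ≤ κ) :
    halfAngleDefect (1 - t ^ 2 / 2 + t ^ 4 / 24 - t ^ 6 / 720) ≤ 3 / 2 * t ^ 2 + κ * t ^ 4 := by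
  set s := t ^ 2 with hs
  have hs₀ : 0 ≤ s := sq_nonneg t
  have h₄ : t ^ 4 = s ^ 2 := by rw [hs]; ring
  have h₆ : t ^ 6 = s ^ 3 := by rw [hs]; ring
  rw [h₄, h₆]
  have hpos : 0 < 1 - s / 2 + s ^ 2 / 24 - s ^ 3 / 720 := by nlinarith [pow_nonneg hs₀ 3]
  rw [halfAngleDefect_le_iff hpos]
  -- the difference of the two sides, for `κ = 3 / 16`, is `s²` times this polynomial
  have hquartic : 0 ≤ 1 / 16 - 19 * s / 160 + 23 * s ^ 2 / 1920 - 17 * s ^ 3 / 34560 +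
      s ^ 4 / 259200 := by
    nlinarith [pow_nonneg hs₀ 3, pow_nonneg hs₀ 4]
  nlinarith [mul_nonneg (sq_nonneg s) hquartic,
    mul_nonneg (mul_nonneg (sq_nonneg s) hpos.le) (sub_nonneg.2 hκ)]

/-- Used with `a = π / 4`, where `√2 / 2 * (1 + r - r² / 2 - r³ / 6) ≤ cos (a - r)`. -/
theorem halfAngleDefect_le_near_endpoint {a κ r : ℝ} (hU : 3 / 2 * a ^ 2 + κ * a ^ 4 = 1)
    (hκ₀ : 0 ≤ κ) (hκ : κ ≤ 0.1966) (ha : a ≤ 0.7854) (hr₀ : 0 ≤ r) (hr : r ≤ a - 0.7) :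
    halfAngleDefect (√2 / 2 * (1 + r - r ^ 2 / 2 - r ^ 3 / 6)) ≤
      3 / 2 * (a - r) ^ 2 + κ * (a - r) ^ 4 := by
  set p := 1 + r - r ^ 2 / 2 - r ^ 3 / 6 with hp
  set q := 1 - r / 2 - r ^ 2 / 6 with hq
  have hp₁ : 1 ≤ p := by nlinarith [pow_nonneg hr₀ 3]
  have hq₀ : 0 < q := by nlinarith
  have hw₂ : √2 ^ 2 = 2 := sq_sqrt zero_le_two
  have hw : 1.4142 ≤ √2 := le_sqrt_of_sq_le (by norm_num)
  -- both `1 - (3/2 (a - r)² + κ (a - r)⁴)` and `p² - 1` are `r` times a cofactor; `key` compares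
  -- the cofactors
  have key : (2 * a - r) * (3 / 2 + κ * (a ^ 2 + (a - r) ^ 2)) * p ≤ √2 * (q * (p + 1)) :=
    calc (2 * a - r) * (3 / 2 + κ * (a ^ 2 + (a - r) ^ 2)) * p
        ≤ (1.5708 - r) * (3 / 2 + 0.1966 * (0.7854 ^ 2 + (0.7854 - r) ^ 2)) * p := by
          gcongr
          · nlinarith
          · linarith
          · linarith
          · linarith
      _ ≤ 1.4142 * (q * (p + 1)) := by
          rw [hp, hq]
          nlinarith [pow_nonneg hr₀ 3, pow_nonneg hr₀ 4, pow_nonneg hr₀ 5]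
      _ ≤ √2 * (q * (p + 1)) := by gcongr
  rw [halfAngleDefect_le_iff (by positivity)]
  linear_combination (r * √2 / 2) * key - hw₂ / 2 - (√2 / 2 * p) * hU

theorem le_halfAngleDefect_cos {t : ℝ} (ht₀ : 0 ≤ t) (ht : t ≤ 1) :
    3 / 2 * t ^ 2 + t ^ 4 / 8 ≤ halfAngleDefect (cos t) := by
  have hcos : 0 < cos t := cos_pos_of_mem_Ioo ⟨by linarith [pi_pos], by linarith [pi_gt_three]⟩
  exact (le_halfAngleDefect_taylor4 (by nlinarith)).trans
    (halfAngleDefect_le_halfAngleDefect hcos (cos_le_taylor4 ht₀))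

noncomputable def sandorConst : ℝ := 16 / π ^ 4 - 3 / (2 * π ^ 2)

theorem sandorConst_eq : sandorConst = (32 - 3 * π ^ 2) / (2 * π ^ 4) := by
  rw [sandorConst]
  field_simp
  ring

theorem three_div_256_le_sandorConst : 3 / 256 ≤ sandorConst := by
  rw [sandorConst_eq, le_div_iff₀ (by positivity)]
  nlinarith [pi_gt_d4, pi_lt_d4, pow_le_pow_left₀ pi_pos.le pi_lt_d4.le 4]

theorem sandorConst_le : sandorConst ≤ 0.0122875 := by
  rw [sandorConst_eq, div_le_iff₀ (by positivity)]
  nlinarith [pi_gt_d4, pi_lt_d4, pow_le_pow_left₀ (by norm_num) pi_gt_d4.le 4]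

theorem halfAngleDefect_cos_le {t : ℝ} (ht₀ : 0 ≤ t) (ht : t ≤ π / 4) :
    halfAngleDefect (cos t) ≤ 3 / 2 * t ^ 2 + 16 * sandorConst * t ^ 4 := by
  have hK := three_div_256_le_sandorConst
  rcases le_or_gt t 0.7 with hsmall | hlarge
  · have ht₂ : t ^ 2 ≤ 1 / 2 := by nlinarith
    have htaylor : 0 < 1 - t ^ 2 / 2 + t ^ 4 / 24 - t ^ 6 / 720 := by
      nlinarith [pow_le_pow_left₀ (sq_nonneg t) ht₂ 3, sq_nonneg (t ^ 2)]
    exact (halfAngleDefect_le_halfAngleDefect htaylor (taylor6_le_cos ht₀)).trans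
      (halfAngleDefect_taylor6_le ht₂ (by linarith))
  · obtain ⟨r, rfl⟩ : ∃ r, t = π / 4 - r := ⟨π / 4 - t, by ring⟩
    have hr₀ : 0 ≤ r := by linarith
    have hcos : √2 / 2 * (1 + r - r ^ 2 / 2 - r ^ 3 / 6) ≤ cos (π / 4 - r) := by
      rw [cos_sub, cos_pi_div_four, sin_pi_div_four]
      nlinarith [one_sub_sq_div_two_le_cos (x := r), sin_ge_sub_cube hr₀, sqrt_nonneg 2]
    refine (halfAngleDefect_le_halfAngleDefect ?_ hcos).trans
      (halfAngleDefect_le_near_endpoint ?_ (by linarith) (by linarith [sandorConst_le])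
        (by linarith [pi_lt_d4]) hr₀ (by linarith))
    · have : 0 < 1 + r - r ^ 2 / 2 - r ^ 3 / 6 := by nlinarith [pi_lt_d4]
      positivity
    · rw [sandorConst]
      field_simp
      ring

theorem sandor_first_degree_two (x : ℝ) (hx : 0 < x) (hx' : x < π / 2) :
    3 / 8 + x ^ 2 / 128 ≤ (1 - Real.cos x / Real.cos (x / 2)) / x ^ 2 ∧
    (1 - Real.cos x / Real.cos (x / 2)) / x ^ 2 ≤ 3 / 8 + (16 / π ^ 4 - 3 / (2 * π ^ 2)) * x ^ 2 ∧
    3 / 8 + (16 / π ^ 4 - 3 / (2 * π ^ 2)) * x ^ 2 ≤ 4 / π ^ 2 := by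
  have hcos : 0 < cos (x / 2) := cos_pos_of_mem_Ioo ⟨by linarith, by linarith⟩
  have hx₂ : 0 < x ^ 2 := by positivity
  rw [show 16 / π ^ 4 - 3 / (2 * π ^ 2) = sandorConst from rfl,
    one_sub_cos_div_cos_half hcos.ne', le_div_iff₀ hx₂, div_le_iff₀ hx₂]
  refine ⟨?_, ?_, ?_⟩
  · calc (3 / 8 + x ^ 2 / 128) * x ^ 2 = 3 / 2 * (x / 2) ^ 2 + (x / 2) ^ 4 / 8 := by ring
      _ ≤ _ := le_halfAngleDefect_cos (by linarith) (by linarith [pi_lt_d2])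
  · calc _ ≤ 3 / 2 * (x / 2) ^ 2 + 16 * sandorConst * (x / 2) ^ 4 :=
          halfAngleDefect_cos_le (by linarith) (by linarith)
      _ = _ := by ring
  · calc 3 / 8 + sandorConst * x ^ 2 ≤ 3 / 8 + sandorConst * (π / 2) ^ 2 := by
          gcongr
          linarith [three_div_256_le_sandorConst]
      _ = 4 / π ^ 2 := by
          rw [sandorConst]
          field_simp
          ring
end

section
/- For every real number x with 0 < x < π/2: 1/4 - (16/π⁴)·(cosh(π/4) + √2/2 - 2)·x² ≤ (2 - sin x / sin(x/2)) / x² ≤ (4/π²)·(cosh(π/4) - √2/2) - x²/192. -/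
open Real Nat

/-!
Since `sin x / sin (x / 2) = 2 cos (x / 2)`, with `u = x / 2` the quantity is
`(2 - 2 cos u) / x² = (cosh u - cos u) / x² - (cosh u + cos u - 2) / x²`.
Both `(cosh u - cos u) / u²` and `(cosh u + cos u - 2) / u⁴` are power series in `u²` with
nonnegative coefficients, hence increasing in `u ≥ 0` and bounded below by their constant
terms `1` and `1 / 12`. Bounding the first by its constant term and the second by its value at
`u = π / 4` gives the lower bound; the other way round gives the upper bound.
-/

theorem hasSum_cosh_sub_cos_div_sq {u : ℝ} (hu : u ≠ 0) :
    HasSum (fun n : ℕ => (1 + (-1) ^ n) / (2 * n + 2)! * (u ^ 2) ^ n)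
      ((cosh u - cos u) / u ^ 2) := by
  have h := (hasSum_nat_add_iff' 1).mpr (((hasSum_cosh u).sub (hasSum_cos u)).div_const (u ^ 2))
  convert h using 1
  · rfl
  · funext n
    rw [show 2 * (n + 1) = 2 * n + 2 by ring]
    field_simp
    ring
  · simp

theorem hasSum_cosh_add_cos_sub_two_div_pow_four {u : ℝ} (hu : u ≠ 0) :
    HasSum (fun n : ℕ => (1 + (-1) ^ n) / (2 * n + 4)! * (u ^ 2) ^ n)
      ((cosh u + cos u - 2) / u ^ 4) := by
  have h := (hasSum_nat_add_iff' 2).mpr (((hasSum_cosh u).add (hasSum_cos u)).div_const (u ^ 4))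
  convert h using 1
  · rfl
  · funext n
    rw [show 2 * (n + 2) = 2 * n + 4 by ring]
    field_simp
    ring
  · simp only [Finset.sum_range_succ, Finset.sum_range_zero]
    field_simp
    ring

theorem hasSum_pow_le_hasSum_pow {a : ℕ → ℝ} (ha : ∀ n, 0 ≤ a n) {s t A B : ℝ} (hs : 0 ≤ s)
    (hst : s ≤ t) (hA : HasSum (fun n => a n * s ^ n) A) (hB : HasSum (fun n => a n * t ^ n) B) :
    A ≤ B :=
  hasSum_le (fun n => mul_le_mul_of_nonneg_left (pow_le_pow_left₀ hs hst n) (ha n)) hA hB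

theorem coeff_zero_le_of_hasSum_pow {a : ℕ → ℝ} (ha : ∀ n, 0 ≤ a n) {t A : ℝ} (ht : 0 ≤ t)
    (hA : HasSum (fun n => a n * t ^ n) A) : a 0 ≤ A := by
  simpa using le_hasSum hA 0 fun n _ => mul_nonneg (ha n) (pow_nonneg ht n)

theorem one_add_neg_one_pow_div_factorial_nonneg (k n : ℕ) :
    0 ≤ (1 + (-1 : ℝ) ^ n) / (2 * n + k)! := by
  rcases neg_one_pow_eq_or ℝ n with h | h <;> rw [h] <;> positivity

theorem cosh_sub_cos_div_sq_mem_Icc {u v : ℝ} (hu : 0 < u) (huv : u ≤ v) :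
    (cosh u - cos u) / u ^ 2 ∈ Set.Icc 1 ((cosh v - cos v) / v ^ 2) := by
  have hu_sum := hasSum_cosh_sub_cos_div_sq hu.ne'
  constructor
  · simpa [factorial] using
      coeff_zero_le_of_hasSum_pow (one_add_neg_one_pow_div_factorial_nonneg 2) (sq_nonneg u) hu_sum
  · exact hasSum_pow_le_hasSum_pow (one_add_neg_one_pow_div_factorial_nonneg 2) (sq_nonneg u)
      (pow_le_pow_left₀ hu.le huv 2) hu_sum (hasSum_cosh_sub_cos_div_sq (hu.trans_le huv).ne')

theorem cosh_add_cos_sub_two_div_pow_four_mem_Icc {u v : ℝ} (hu : 0 < u) (huv : u ≤ v) :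
    (cosh u + cos u - 2) / u ^ 4 ∈ Set.Icc (1 / 12) ((cosh v + cos v - 2) / v ^ 4) := by
  have hu_sum := hasSum_cosh_add_cos_sub_two_div_pow_four hu.ne'
  constructor
  · have h := coeff_zero_le_of_hasSum_pow (one_add_neg_one_pow_div_factorial_nonneg 4)
      (sq_nonneg u) hu_sum
    norm_num [factorial] at h
    linarith
  · exact hasSum_pow_le_hasSum_pow (one_add_neg_one_pow_div_factorial_nonneg 4) (sq_nonneg u)
      (pow_le_pow_left₀ hu.le huv 2) hu_sum
      (hasSum_cosh_add_cos_sub_two_div_pow_four (hu.trans_le huv).ne')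

theorem two_sub_sin_div_sin_half_div_sq {x : ℝ} (hx : sin (x / 2) ≠ 0) :
    (2 - sin x / sin (x / 2)) / x ^ 2 =
      (cosh (x / 2) - cos (x / 2)) / (x / 2) ^ 2 / 4
        - (cosh (x / 2) + cos (x / 2) - 2) / (x / 2) ^ 4 * x ^ 2 / 16 := by
  have hx0 : x ≠ 0 := by rintro rfl; simp at hx
  rw [show x = 2 * (x / 2) by ring, sin_two_mul]
  field_simp
  ring

theorem improved_sandor_second_bounds (x : ℝ) (hx : 0 < x) (hx' : x < π / 2) :
    1 / 4 - (16 / π ^ 4) * (Real.cosh (π / 4) + Real.sqrt 2 / 2 - 2) * x ^ 2 ≤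
      (2 - Real.sin x / Real.sin (x / 2)) / x ^ 2 ∧
    (2 - Real.sin x / Real.sin (x / 2)) / x ^ 2 ≤
      (4 / π ^ 2) * (Real.cosh (π / 4) - Real.sqrt 2 / 2) - x ^ 2 / 192 := by
  have hu : 0 < x / 2 := by positivity
  have hu' : x / 2 ≤ π / 4 := by linarith
  obtain ⟨hA_ge, hA_le⟩ := cosh_sub_cos_div_sq_mem_Icc hu hu'
  obtain ⟨hB_ge, hB_le⟩ := cosh_add_cos_sub_two_div_pow_four_mem_Icc hu hu'
  rw [cos_pi_div_four] at hA_le hB_le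
  have hA_val : (cosh (π / 4) - √2 / 2) / (π / 4) ^ 2 / 4 = 4 / π ^ 2 * (cosh (π / 4) - √2 / 2) := by
    field_simp
  have hB_val : (cosh (π / 4) + √2 / 2 - 2) / (π / 4) ^ 4 / 16 =
      16 / π ^ 4 * (cosh (π / 4) + √2 / 2 - 2) := by
    field_simp; ring
  rw [two_sub_sin_div_sin_half_div_sq (sin_pos_of_pos_of_lt_pi hu (by linarith)).ne',
    ← hA_val, ← hB_val]
  constructor
  · linarith [mul_le_mul_of_nonneg_right hB_le (sq_nonneg x)]
  · linarith [mul_le_mul_of_nonneg_right hB_ge (sq_nonneg x)]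
end

section
/- Let δ₂ = (4√3·e^{-π/8}/π)·√(8 + 8e^{π/2} - (π² + 8√2)·e^{π/4}) (approximately 0.22525). Then the quantity under the square root is positive, δ₂ ∈ (0, π/2), and for every real x with δ₂ ≤ x ≤ π/2: (4/π²)·(cosh(π/4) - √2/2) - x²/192 ≤ 1/4. -/
open Real

/-!
The radius `δ₂` is exactly the point where the bound reaches `1/4`: since
`8 + 8e^{2y} - c e^y = e^y (16 cosh y - c)`, one gets
`δ₂² / 192 = (4/π²)(cosh(π/4) - √2/2) - 1/4`, and the bound decreases in `x ≥ 0`.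
The remaining claims reduce to the numerical enclosure
`π² + 8√2 < 16 cosh(π/4) < π² + 8√2 + π⁴/192` (the left inequality makes the radicand positive,
the right one gives `δ₂ < π/2`), obtained from fourth-order Taylor bounds on `cosh`.
-/

noncomputable def taylorUpperBound (x : ℝ) : ℝ :=
  4 / π ^ 2 * (cosh (π / 4) - √2 / 2) - x ^ 2 / 192

noncomputable def δ₂ : ℝ :=
  (4 * √3 * exp (-π / 8) / π) *
    √(8 + 8 * exp (π / 2) - (π ^ 2 + 8 * √2) * exp (π / 4))

lemma one_add_sq_div_two_add_pow_four_div_le_cosh (y : ℝ) :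
    1 + y ^ 2 / 2 + y ^ 4 / 24 ≤ cosh y := by
  have h := sum_le_hasSum (Finset.range 3)
    (fun n _ => div_nonneg ((even_two_mul n).pow_nonneg y) (Nat.cast_nonneg _)) (hasSum_cosh y)
  norm_num [Finset.sum_range_succ, Nat.factorial] at h
  linarith

lemma cosh_le_one_add_sq_div_two_add_pow_four {y : ℝ} (hy : |y| ≤ 1) :
    cosh y ≤ 1 + y ^ 2 / 2 + 5 * y ^ 4 / 96 := by
  have hpos := (abs_le.1 (exp_bound hy (n := 4) (by norm_num))).2
  have hneg := (abs_le.1 (exp_bound (abs_neg y ▸ hy) (n := 4) (by norm_num))).2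
  rw [abs_neg, pow_abs, abs_of_nonneg (by positivity)] at hneg
  rw [pow_abs, abs_of_nonneg (by positivity)] at hpos
  norm_num [Finset.sum_range_succ, Nat.factorial] at hpos hneg
  rw [cosh_eq]
  linarith

lemma eight_add_eight_exp_two_mul_sub_mul_exp (y c : ℝ) :
    8 + 8 * exp (2 * y) - c * exp y = exp y * (16 * cosh y - c) := by
  rw [cosh_eq, exp_neg, two_mul, exp_add]
  field_simp
  ring

lemma sqrt_two_bounds : 1.4142 < √2 ∧ √2 < 1.4143 := by
  have h := sq_sqrt (show (0 : ℝ) ≤ 2 by norm_num)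
  have h0 := sqrt_nonneg 2
  constructor <;> nlinarith

lemma pi_sq_add_eight_sqrt_two_lt_sixteen_cosh : π ^ 2 + 8 * √2 < 16 * cosh (π / 4) := by
  have hcosh := one_add_sq_div_two_add_pow_four_div_le_cosh (π / 4)
  have hπ2 : π ^ 2 < 9.86966 := by nlinarith [pi_lt_d4, pi_pos]
  have hπ4 : 97 < π ^ 4 := by nlinarith [pi_gt_d2]
  nlinarith [sqrt_two_bounds]

lemma sixteen_cosh_lt_pi_sq_add_eight_sqrt_two_add :
    16 * cosh (π / 4) < π ^ 2 + 8 * √2 + π ^ 4 / 192 := by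
  have hcosh := cosh_le_one_add_sq_div_two_add_pow_four (y := π / 4)
    (by rw [abs_of_pos (by positivity)]; linarith [pi_lt_d2])
  have hπ2 : 9.8596 < π ^ 2 := by nlinarith [pi_gt_d2]
  have hπ4 : 0 < π ^ 4 := by positivity
  nlinarith [sqrt_two_bounds]

lemma radicand_pos : 0 < 8 + 8 * exp (π / 2) - (π ^ 2 + 8 * √2) * exp (π / 4) := by
  rw [show π / 2 = 2 * (π / 4) by ring, eight_add_eight_exp_two_mul_sub_mul_exp]
  exact mul_pos (exp_pos _) (sub_pos.2 pi_sq_add_eight_sqrt_two_lt_sixteen_cosh)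

lemma δ₂_pos : 0 < δ₂ :=
  mul_pos (by positivity) (sqrt_pos.2 radicand_pos)

lemma δ₂_sq : δ₂ ^ 2 = 48 * (16 * cosh (π / 4) - (π ^ 2 + 8 * √2)) / π ^ 2 := by
  have hexp : exp (-π / 8) ^ 2 * exp (π / 4) = 1 := by
    rw [sq, ← exp_add, ← exp_add]; ring_nf; exact exp_zero
  rw [δ₂, mul_pow, sq_sqrt radicand_pos.le, show π / 2 = 2 * (π / 4) by ring,
    eight_add_eight_exp_two_mul_sub_mul_exp, div_pow, mul_pow, mul_pow, sq_sqrt (by norm_num)]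
  linear_combination 48 * (16 * cosh (π / 4) - (π ^ 2 + 8 * √2)) / π ^ 2 * hexp

lemma δ₂_lt_pi_div_two : δ₂ < π / 2 := by
  refine lt_of_pow_lt_pow_left₀ 2 (by positivity) ?_
  rw [δ₂_sq, div_lt_iff₀ (by positivity)]
  nlinarith [sixteen_cosh_lt_pi_sq_add_eight_sqrt_two_add]

lemma taylorUpperBound_δ₂ : taylorUpperBound δ₂ = 1 / 4 := by
  rw [taylorUpperBound, δ₂_sq]
  field_simp
  ring

lemma taylorUpperBound_antitoneOn : AntitoneOn taylorUpperBound (Set.Ici 0) :=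
  fun a ha _ _ hab => sub_le_sub_left (by gcongr) _

theorem upper_bound_improvement_interval :
    0 < 8 + 8 * Real.exp (π / 2) - (π ^ 2 + 8 * Real.sqrt 2) * Real.exp (π / 4) ∧
    (4 * Real.sqrt 3 * Real.exp (-π / 8) / π) *
      Real.sqrt (8 + 8 * Real.exp (π / 2) - (π ^ 2 + 8 * Real.sqrt 2) * Real.exp (π / 4)) ∈
      Set.Ioo 0 (π / 2) ∧
    ∀ x : ℝ,
      (4 * Real.sqrt 3 * Real.exp (-π / 8) / π) *
        Real.sqrt (8 + 8 * Real.exp (π / 2) - (π ^ 2 + 8 * Real.sqrt 2) * Real.exp (π / 4)) ≤ x →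
      x ≤ π / 2 →
      (4 / π ^ 2) * (Real.cosh (π / 4) - Real.sqrt 2 / 2) - x ^ 2 / 192 ≤ 1 / 4 := by
  refine ⟨radicand_pos, ⟨δ₂_pos, δ₂_lt_pi_div_two⟩, fun x hx _ => ?_⟩
  calc taylorUpperBound x ≤ taylorUpperBound δ₂ :=
        taylorUpperBound_antitoneOn δ₂_pos.le (δ₂_pos.le.trans hx) hx
    _ = 1 / 4 := taylorUpperBound_δ₂
end

section
/- Let δ₁ = (√2·π·e^{π/8}·√(π² + 16√2 - 32)) / (8·√((√2 - 4)·e^{π/4} + e^{π/2} + 1)) (approximately 1.55456). Then π² + 16√2 - 32 > 0, (√2 - 4)e^{π/4} + e^{π/2} + 1 > 0, δ₁ > 0, and for every real x with 0 ≤ x ≤ δ₁: (4/π²)·(2 - √2) ≤ 1/4 - (16/π⁴)·(cosh(π/4) + √2/2 - 2)·x². -/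
set_option maxHeartbeats 1000000

open Real

theorem lower_bound_improvement_interval :
    0 < π ^ 2 + 16 * Real.sqrt 2 - 32 ∧
    0 < (Real.sqrt 2 - 4) * Real.exp (π / 4) + Real.exp (π / 2) + 1 ∧
    0 < (Real.sqrt 2 * π * Real.exp (π / 8) * Real.sqrt (π ^ 2 + 16 * Real.sqrt 2 - 32)) /
      (8 * Real.sqrt ((Real.sqrt 2 - 4) * Real.exp (π / 4) + Real.exp (π / 2) + 1)) ∧
    ∀ x : ℝ, 0 ≤ x →
      x ≤ (Real.sqrt 2 * π * Real.exp (π / 8) * Real.sqrt (π ^ 2 + 16 * Real.sqrt 2 - 32)) /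
        (8 * Real.sqrt ((Real.sqrt 2 - 4) * Real.exp (π / 4) + Real.exp (π / 2) + 1)) →
      (4 / π ^ 2) * (2 - Real.sqrt 2) ≤
        1 / 4 - (16 / π ^ 4) * (Real.cosh (π / 4) + Real.sqrt 2 / 2 - 2) * x ^ 2 := by
  have hπ : 0 < π := pi_pos
  have hπ2 : (3.141592 : ℝ) < π := pi_gt_d6
  have hs2 : Real.sqrt 2 ^ 2 = 2 := Real.sq_sqrt (by norm_num)
  have hs2n : (0:ℝ) ≤ Real.sqrt 2 := Real.sqrt_nonneg 2
  have h2lb : (1.414 : ℝ) < Real.sqrt 2 := by nlinarith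
  have h2ub : Real.sqrt 2 < 1.5 := by nlinarith
  have hA : 0 < π ^ 2 + 16 * Real.sqrt 2 - 32 := by nlinarith
  -- cosh lower bound
  have hsinh : π / 8 < Real.sinh (π / 8) := Real.self_lt_sinh_iff.2 (by positivity)
  have hcosh2 : Real.cosh (π / 4) = 2 * Real.sinh (π / 8) ^ 2 + 1 := by
    have h1 := Real.cosh_two_mul (π / 8)
    have h2 := Real.sinh_sq (π / 8)
    have : π / 4 = 2 * (π / 8) := by ring
    rw [this, h1]; linarith
  have hcoshlb : 1 + π ^ 2 / 32 ≤ Real.cosh (π / 4) := by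
    rw [hcosh2]; nlinarith
  have hc : 0 < Real.cosh (π / 4) + Real.sqrt 2 / 2 - 2 := by nlinarith
  have he4 : (0:ℝ) < Real.exp (π / 4) := Real.exp_pos _
  have hee : Real.exp (π / 4) * Real.exp (π / 4) = Real.exp (π / 2) := by
    rw [← Real.exp_add]; congr 1; ring
  have hexp8 : Real.exp (π / 8) ^ 2 = Real.exp (π / 4) := by
    rw [sq, ← Real.exp_add]; congr 1; ring
  have hD : (Real.sqrt 2 - 4) * Real.exp (π / 4) + Real.exp (π / 2) + 1
      = 2 * (Real.cosh (π / 4) + Real.sqrt 2 / 2 - 2) * Real.exp (π / 4) := by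
    rw [Real.cosh_eq, Real.exp_neg]
    field_simp
    nlinarith [hee]
  have hDpos : 0 < (Real.sqrt 2 - 4) * Real.exp (π / 4) + Real.exp (π / 2) + 1 := by
    rw [hD]; positivity
  set A := π ^ 2 + 16 * Real.sqrt 2 - 32 with hAdef
  set D := (Real.sqrt 2 - 4) * Real.exp (π / 4) + Real.exp (π / 2) + 1 with hDdef
  set c := Real.cosh (π / 4) + Real.sqrt 2 / 2 - 2 with hcdef
  set δ := (Real.sqrt 2 * π * Real.exp (π / 8) * Real.sqrt A) / (8 * Real.sqrt D) with hδdef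
  have hδpos : 0 < δ := by
    apply div_pos
    · have := Real.sqrt_pos.2 hA
      positivity
    · have := Real.sqrt_pos.2 hDpos
      positivity
  refine ⟨hA, hDpos, hδpos, ?_⟩
  intro x hx0 hx1
  have hδsq : δ ^ 2 = π ^ 2 * A / (64 * c) := by
    rw [hδdef, div_pow, mul_pow, mul_pow, mul_pow, mul_pow, Real.sq_sqrt (by norm_num : (0:ℝ) ≤ 2),
      Real.sq_sqrt hA.le, Real.sq_sqrt hDpos.le, hexp8, hD]
    rw [show (8:ℝ)^2 = 64 by norm_num]
    field_simp
  have hx2 : x ^ 2 ≤ δ ^ 2 := by nlinarith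
  have key : (16 / π ^ 4) * c * x ^ 2 ≤ A / (4 * π ^ 2) := by
    have h1 : (16 / π ^ 4) * c * δ ^ 2 = A / (4 * π ^ 2) := by
      rw [hδsq]; field_simp; ring
    have h2 : (16 / π ^ 4) * c * x ^ 2 ≤ (16 / π ^ 4) * c * δ ^ 2 := by
      apply mul_le_mul_of_nonneg_left hx2
      positivity
    linarith
  have heq : 1 / 4 - A / (4 * π ^ 2) = 4 / π ^ 2 * (2 - Real.sqrt 2) := by
    rw [hAdef]; field_simp; ring
  linarith
end
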